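/- arXiv:2212.08371 — 7 statements merged into one kernel-verified Lean document; each statement's English description precedes it below -/
import Mathlib

section
/- Let A be a real symmetric positive-definite matrix with 2x2 block structure A = [[A_FF, -A_FC], [-A_FC^T, A_CC]] with respect to a partition of its index set into sets F and C. Suppose D_FF is a symmetric matrix such that, with E := A_FF - D_FF and some real ε ≥ 0, both E and εD_FF - E are positive semidefinite, and suppose the matrix [[D_FF, -A_FC], [-A_FC^T, A_CC]] is positive semidefinite. (These hypotheses imply D_FF is positive definite, hence invertible, and that P^T A P below is invertible.) Define σ = 2/(2+ε), the relaxation error-propagation matrix R = I - σ·[[D_FF^{-1}, 0],[0, 0]]·A, the interpolation matrix P = [[D_FF^{-1} A_FC],[I]], and the coarse-grid correction error-propagation matrix T = I - P (P^T A P)^{-1} P^T A. Then for every positive integer ν, the two-grid error-propagation matrix MG₂ = R^ν T R^ν satisfies, for every vector x, (MG₂ x)^T A (MG₂ x) ≤ c²·(x^T A x), where c² = (ε/(1+ε))·(1 + ε^{2ν-1}/(2+ε)^{2ν}), and moreover c² < 1. -/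
/-!
In the energy inner product `⟪x, y⟫_A = xᵀ A y`, the relaxation `R = 1 - σ M A` with
`M = diag(D_FF⁻¹, 0)` is self-adjoint. Writing `A = w⋆w`, it is conjugate to `1 - σ b` with
`b = w M w⋆ ⪰ 0`, and `A_FF ⪯ (1 + ε) D_FF` gives `b² ⪯ (1 + ε) b`, so the spectrum of `b` lies
in `[0, 1 + ε]`. Convexity of `t ↦ t ^ (2ν)` on that interval yields
`‖R^ν x‖²_A ≤ ‖x‖²_A - β ‖A x‖²_M` with `β = smoothingGain ε ν`.
The coarse-grid correction `T` is the `A`-orthogonal projection onto the `A`-complement of the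
range of `P`, and on that complement `[[D_FF, -A_FC], [-A_FCᵀ, A_CC]] ⪯ A` gives the
approximation property `‖s‖²_A ≤ ‖A s‖²_M`. Hence
`‖MG x‖²_A ≤ (1 - β) ‖T R^ν x‖²_A ≤ (1 - β) ‖x‖²_A`, and `1 - β` is the stated `c²`.
-/

open Matrix Set
open scoped MatrixOrder

section Smoothing

variable {𝒜 : Type*} [Ring 𝒜] [StarRing 𝒜] [PartialOrder 𝒜] [StarOrderedRing 𝒜]
  [TopologicalSpace 𝒜] [Algebra ℝ 𝒜] [ContinuousFunctionalCalculus ℝ 𝒜 IsSelfAdjoint]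

lemma spectrum_subset_Icc_of_mul_self_le [NonnegSpectrumClass ℝ 𝒜] {b : 𝒜} {κ : ℝ}
    (hκ : 0 ≤ κ) (hb : 0 ≤ b) (hbb : b * b ≤ κ • b) : spectrum ℝ b ⊆ Icc 0 κ := by
  have hsa : IsSelfAdjoint b := .of_nonneg hb
  have hcfc : cfc (fun d : ℝ => κ * d - d ^ 2) b = κ • b - b * b := by
    rw [cfc_sub _ _, cfc_const_mul_id _ _, cfc_pow _ _ _, cfc_id' ℝ b, sq]
  have hq := (cfc_nonneg_iff (fun d : ℝ => κ * d - d ^ 2) b).mp (hcfc ▸ sub_nonneg.mpr hbb)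
  intro d hd
  have hd0 : 0 ≤ d := spectrum_nonneg_of_nonneg hb hd
  exact ⟨hd0, by nlinarith [hq d hd]⟩

lemma one_sub_smul_pow_le_of_spectrum_subset {b : 𝒜} (hb : IsSelfAdjoint b) {s : Set ℝ}
    (hs : spectrum ℝ b ⊆ s) {σ β : ℝ} {n : ℕ} (h : ∀ d ∈ s, (1 - σ * d) ^ n ≤ 1 - β * d) :
    (1 - σ • b) ^ n ≤ 1 - β • b := by
  have hcfc : ∀ c : ℝ, cfc (fun d : ℝ => 1 - c * d) b = 1 - c • b := fun c => by
    rw [cfc_sub _ _, cfc_const_one ℝ b, cfc_const_mul_id _ _]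
  rw [← hcfc, ← hcfc, ← cfc_pow _ _ _]
  exact cfc_mono fun d hd => h d (hs hd)

/-- With `a = w⋆w`, the operator `1 - σ m a` is intertwined by `w` with the self-adjoint
`1 - σ b`, `b = w m w⋆`, whose spectrum lies in `[0, κ]`. -/
theorem star_pow_mul_mul_pow_le [StarModule ℝ 𝒜] [NonnegSpectrumClass ℝ 𝒜] {a m w : 𝒜}
    (ha : a = star w * w) (hm : 0 ≤ m) {κ σ β : ℝ} (hκ : 0 ≤ κ) (hmam : m * a * m ≤ κ • m)
    {n : ℕ} (h : ∀ d ∈ Icc 0 κ, (1 - σ * d) ^ (2 * n) ≤ 1 - β * d) :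
    star ((1 - σ • (m * a)) ^ n) * a * (1 - σ • (m * a)) ^ n ≤ a - β • (a * m * a) := by
  subst ha
  set b := w * m * star w with hb_def
  have hb : 0 ≤ b := star_right_conjugate_nonneg hm w
  have hbb : b * b ≤ κ • b := by
    simpa only [hb_def, mul_assoc, mul_smul_comm, smul_mul_assoc] using
      star_right_conjugate_le_conjugate hmam w
  have hQ : IsSelfAdjoint (1 - σ • b) :=
    (IsSelfAdjoint.one 𝒜).sub ((IsSelfAdjoint.all σ).smul (IsSelfAdjoint.of_nonneg hb))
  have hsemiconj : SemiconjBy w (1 - σ • (m * (star w * w))) (1 - σ • b) := by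
    simp only [SemiconjBy, mul_sub, sub_mul, mul_one, one_mul, mul_smul_comm, smul_mul_assoc,
      hb_def, mul_assoc]
  have hpow := one_sub_smul_pow_le_of_spectrum_subset (IsSelfAdjoint.of_nonneg hb)
    (spectrum_subset_Icc_of_mul_self_le hκ hb hbb) h
  calc _ = star (w * (1 - σ • (m * (star w * w))) ^ n) *
        (w * (1 - σ • (m * (star w * w))) ^ n) := by
        simp only [star_mul, mul_assoc]
    _ = star w * (1 - σ • b) ^ (2 * n) * w := by
        rw [(hsemiconj.pow_right n).eq, star_mul, (hQ.pow n).star_eq, two_mul, pow_add]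
        simp only [mul_assoc]
    _ ≤ star w * (1 - β • b) * w := star_left_conjugate_le_conjugate hpow w
    _ = _ := by
        simp only [mul_sub, sub_mul, mul_one, mul_smul_comm, smul_mul_assoc, hb_def, mul_assoc]

end Smoothing

noncomputable def smoothingGain (ε : ℝ) (ν : ℕ) : ℝ := (1 - (ε / (2 + ε)) ^ (2 * ν)) / (1 + ε)

lemma smoothingGain_pos {ε : ℝ} (hε : 0 ≤ ε) {ν : ℕ} (hν : 1 ≤ ν) : 0 < smoothingGain ε ν :=
  div_pos (sub_pos.mpr (pow_lt_one₀ (by positivity) ((div_lt_one (by linarith)).mpr (by linarith))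
    (by omega))) (by linarith)

lemma amgr_factor_eq {ε : ℝ} (hε : 0 ≤ ε) {ν : ℕ} (hν : 1 ≤ ν) :
    ε / (1 + ε) * (1 + ε ^ (2 * ν - 1) / (2 + ε) ^ (2 * ν)) = 1 - smoothingGain ε ν := by
  obtain ⟨m, rfl⟩ : ∃ m, ν = m + 1 := ⟨ν - 1, by omega⟩
  have h2ε : 0 < 2 + ε := by linarith
  have h1ε : 0 < 1 + ε := by linarith
  rw [smoothingGain, show 2 * (m + 1) - 1 = 2 * m + 1 by omega, div_pow]
  field_simp
  ring

lemma one_sub_mul_pow_le {ε d : ℝ} (hε : 0 ≤ ε) (hd : d ∈ Icc 0 (1 + ε)) (m : ℕ) :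
    (1 - 2 / (2 + ε) * d) ^ (2 * m) ≤ 1 - smoothingGain ε m * d := by
  have h1ε : 0 < 1 + ε := by linarith
  have ht : 0 ≤ d / (1 + ε) := div_nonneg hd.1 h1ε.le
  have ht' : 0 ≤ 1 - d / (1 + ε) := by rw [sub_nonneg, div_le_one h1ε]; exact hd.2
  -- `1 - 2d/(2+ε)` is the point at parameter `d/(1+ε)` on the segment from `1` to `-ε/(2+ε)`
  have hconv := (even_two_mul m).convexOn_pow.2 (mem_univ 1) (mem_univ (-(ε / (2 + ε)))) ht' ht
    (sub_add_cancel _ _)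
  simp only [smul_eq_mul, one_pow, (even_two_mul m).neg_pow] at hconv
  have h2ε : 0 < 2 + ε := by linarith
  have hpoint : (1 - d / (1 + ε)) * 1 + d / (1 + ε) * -(ε / (2 + ε)) = 1 - 2 / (2 + ε) * d := by
    field_simp; ring
  have hvalue : (1 - d / (1 + ε)) * 1 + d / (1 + ε) * (ε / (2 + ε)) ^ (2 * m)
      = 1 - smoothingGain ε m * d := by
    rw [smoothingGain]; field_simp; ring
  rwa [hpoint, hvalue] at hconv

namespace Matrix

lemma fromRows_one_mulVec_injective {m n R : Type*} [Fintype n] [DecidableEq n]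
    [Semiring R] (X : Matrix m n R) : Function.Injective (fromRows X (1 : Matrix n n R)).mulVec :=
  fun u v h => funext fun j => by simpa [fromRows_mulVec] using congrFun h (Sum.inr j)

lemma posSemidef_fromBlocks_zero {m n R : Type*} [Fintype m] [Fintype n] [DecidableEq m]
    [Ring R] [PartialOrder R] [StarRing R] {X : Matrix m m R} (hX : X.PosSemidef) :
    (fromBlocks X 0 0 0 : Matrix (m ⊕ n) (m ⊕ n) R).PosSemidef := by
  convert hX.conjTranspose_mul_mul_same (fromCols (1 : Matrix m m R) (0 : Matrix m n R)) using 1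
  ext (i | i) (j | j) <;> simp [conjTranspose_fromCols_eq_fromRows_conjTranspose]

lemma PosDef.of_posSemidef_smul_sub_sub {n : Type*} {X D : Matrix n n ℝ} {ε : ℝ}
    (hX : X.PosDef) (hε : 0 ≤ ε) (h : (ε • D - (X - D)).PosSemidef) : D.PosDef := by
  have h1ε : 0 < 1 + ε := by linarith
  convert (hX.add_posSemidef h).smul (inv_pos.mpr h1ε) using 1
  rw [show X + (ε • D - (X - D)) = (1 + ε) • D by module, smul_smul, inv_mul_cancel₀ h1ε.ne',
    one_smul]


variable {n c : Type*} [Fintype n] [Fintype c]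

lemma dotProduct_transpose_mul_mul_mulVec (N : Matrix n c ℝ) (M : Matrix n n ℝ) (z : c → ℝ) :
    z ⬝ᵥ ((Nᵀ * M * N) *ᵥ z) = (N *ᵥ z) ⬝ᵥ (M *ᵥ (N *ᵥ z)) := by
  rw [← mulVec_mulVec, ← mulVec_mulVec, dotProduct_mulVec, vecMul_transpose]

lemma dotProduct_mulVec_mono {A B : Matrix n n ℝ} (h : A ≤ B) (x : n → ℝ) :
    x ⬝ᵥ (A *ᵥ x) ≤ x ⬝ᵥ (B *ᵥ x) := by
  have := (Matrix.le_iff.mp h).dotProduct_mulVec_nonneg x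
  rwa [star_trivial, sub_mulVec, dotProduct_sub, sub_nonneg] at this

lemma PosSemidef.dotProduct_mulVec_comm {A : Matrix n n ℝ} (hA : A.PosSemidef) (x y : n → ℝ) :
    x ⬝ᵥ (A *ᵥ y) = y ⬝ᵥ (A *ᵥ x) := by
  rw [dotProduct_mulVec, ← mulVec_transpose, ← conjTranspose_eq_transpose_of_trivial, hA.1.eq,
    dotProduct_comm]

/-- Expand `0 ≤ (s - u)ᵀ B (s - u)` and use `B u = A s`, `B ≤ A`. -/
lemma dotProduct_mulVec_le_of_mulVec_eq {A B : Matrix n n ℝ} (hB : B.PosSemidef) (hBA : B ≤ A)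
    {s u : n → ℝ} (h : B *ᵥ u = A *ᵥ s) : s ⬝ᵥ (A *ᵥ s) ≤ u ⬝ᵥ (B *ᵥ u) := by
  have h0 : 0 ≤ (s - u) ⬝ᵥ (B *ᵥ (s - u)) := by simpa using hB.dotProduct_mulVec_nonneg (s - u)
  have hsu : s ⬝ᵥ (B *ᵥ u) = s ⬝ᵥ (A *ᵥ s) := by rw [h]
  have hus : u ⬝ᵥ (B *ᵥ s) = s ⬝ᵥ (A *ᵥ s) := by rw [← hB.dotProduct_mulVec_comm, hsu]
  rw [mulVec_sub, dotProduct_sub, sub_dotProduct, sub_dotProduct, hsu, hus] at h0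
  linarith [dotProduct_mulVec_mono hBA s]

lemma mulVec_dotProduct_eq_zero_of_transpose_mulVec_eq_zero {P : Matrix n c ℝ} {v : n → ℝ}
    (hv : Pᵀ *ᵥ v = 0) (u : c → ℝ) : (P *ᵥ u) ⬝ᵥ v = 0 := by
  rw [← vecMul_transpose, ← dotProduct_mulVec, hv, dotProduct_zero]

lemma PosDef.isUnit_det_transpose_mul_mul [DecidableEq c] {A : Matrix n n ℝ} (hA : A.PosDef)
    {P : Matrix n c ℝ} (hP : Function.Injective P.mulVec) : IsUnit (Pᵀ * A * P).det :=
  (isUnit_iff_isUnit_det _).mp (by simpa using (hA.conjTranspose_mul_mul_same hP).isUnit)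

variable [DecidableEq n]

theorem energy_one_sub_smul_mul_pow_le {A M : Matrix n n ℝ} (hA : A.PosSemidef)
    (hM : M.PosSemidef) {κ σ β : ℝ} (hκ : 0 ≤ κ) (hMAM : M * A * M ≤ κ • M) {m : ℕ}
    (h : ∀ d ∈ Icc 0 κ, (1 - σ * d) ^ (2 * m) ≤ 1 - β * d) (x : n → ℝ) :
    ((1 - σ • (M * A)) ^ m *ᵥ x) ⬝ᵥ (A *ᵥ ((1 - σ • (M * A)) ^ m *ᵥ x))
      ≤ x ⬝ᵥ (A *ᵥ x) - β * ((A *ᵥ x) ⬝ᵥ (M *ᵥ (A *ᵥ x))) := by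
  obtain ⟨w, hw⟩ := CStarAlgebra.nonneg_iff_eq_star_mul_self.mp hA.nonneg
  have hle := dotProduct_mulVec_mono (star_pow_mul_mul_pow_le hw hM.nonneg hκ hMAM h) x
  have hAMA : x ⬝ᵥ ((A * M * A) *ᵥ x) = (A *ᵥ x) ⬝ᵥ (M *ᵥ (A *ᵥ x)) := by
    nth_rewrite 1 [← show Aᵀ = A by simpa using hA.1.eq]
    exact dotProduct_transpose_mul_mul_mulVec A M x
  rwa [star_eq_conjTranspose, conjTranspose_eq_transpose_of_trivial,
    dotProduct_transpose_mul_mul_mulVec, sub_mulVec, dotProduct_sub, smul_mulVec, dotProduct_smul,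
    smul_eq_mul, hAMA] at hle

variable [DecidableEq c]

noncomputable def coarseGridCorrection (A : Matrix n n ℝ) (P : Matrix n c ℝ) : Matrix n n ℝ :=
  1 - P * (Pᵀ * A * P)⁻¹ * Pᵀ * A

lemma transpose_mul_mul_coarseGridCorrection {A : Matrix n n ℝ} {P : Matrix n c ℝ}
    (hPAP : IsUnit (Pᵀ * A * P).det) : Pᵀ * A * coarseGridCorrection A P = 0 := by
  rw [coarseGridCorrection, Matrix.mul_sub, Matrix.mul_one, sub_eq_zero]
  calc Pᵀ * A = (Pᵀ * A * P * (Pᵀ * A * P)⁻¹) * (Pᵀ * A) := by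
        rw [mul_nonsing_inv _ hPAP, Matrix.one_mul]
    _ = _ := by simp only [Matrix.mul_assoc]

/-- `y = T y + P u` is an `A`-orthogonal splitting. -/
lemma energy_coarseGridCorrection_le {A : Matrix n n ℝ} (hA : A.PosSemidef) {P : Matrix n c ℝ}
    (hPAP : IsUnit (Pᵀ * A * P).det) (y : n → ℝ) :
    (coarseGridCorrection A P *ᵥ y) ⬝ᵥ (A *ᵥ (coarseGridCorrection A P *ᵥ y))
      ≤ y ⬝ᵥ (A *ᵥ y) := by
  set s := coarseGridCorrection A P *ᵥ y
  set p := P *ᵥ (((Pᵀ * A * P)⁻¹ * Pᵀ * A) *ᵥ y)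
  have hy : s + p = y := by
    simp only [s, p, coarseGridCorrection, sub_mulVec, one_mulVec, mulVec_mulVec, Matrix.mul_assoc]
    abel
  have hPAs : Pᵀ *ᵥ (A *ᵥ s) = 0 := by
    rw [mulVec_mulVec, mulVec_mulVec, transpose_mul_mul_coarseGridCorrection hPAP, zero_mulVec]
  have hps : p ⬝ᵥ (A *ᵥ s) = 0 := mulVec_dotProduct_eq_zero_of_transpose_mulVec_eq_zero hPAs _
  have hsp : s ⬝ᵥ (A *ᵥ p) = 0 := by rw [hA.dotProduct_mulVec_comm, hps]
  have hp : 0 ≤ p ⬝ᵥ (A *ᵥ p) := by simpa using hA.dotProduct_mulVec_nonneg p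
  rw [← hy, mulVec_add, dotProduct_add, add_dotProduct, add_dotProduct, hsp, hps]
  linarith

end Matrix

section AMGr

variable {F C : Type*} [Fintype F] [Fintype C] [DecidableEq F]
  {A_FF D_FF : Matrix F F ℝ} {A_FC : Matrix F C ℝ} {A_CC : Matrix C C ℝ}

lemma fromBlocks_inv_mul_mul_le {ε : ℝ} (hD : D_FF.PosDef)
    (hEε : (ε • D_FF - (A_FF - D_FF)).PosSemidef) :
    fromBlocks D_FF⁻¹ 0 0 0 * fromBlocks A_FF (-A_FC) (-A_FCᵀ) A_CC * fromBlocks D_FF⁻¹ 0 0 0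
      ≤ (1 + ε) • fromBlocks D_FF⁻¹ 0 0 0 := by
  have hDD : D_FF⁻¹ * D_FF * D_FF⁻¹ = D_FF⁻¹ := by
    rw [nonsing_inv_mul _ ((isUnit_iff_isUnit_det _).mp hD.isUnit), Matrix.one_mul]
  have key := hEε.conjTranspose_mul_mul_same D_FF⁻¹
  rw [hD.inv.1.eq] at key
  have hdiff : (1 + ε) • fromBlocks D_FF⁻¹ 0 0 0 -
      fromBlocks D_FF⁻¹ 0 0 0 * fromBlocks A_FF (-A_FC) (-A_FCᵀ) A_CC * fromBlocks D_FF⁻¹ 0 0 0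
      = fromBlocks (D_FF⁻¹ * (ε • D_FF - (A_FF - D_FF)) * D_FF⁻¹) 0 0 (0 : Matrix C C ℝ) := by
    simp only [fromBlocks_multiply, fromBlocks_smul, Matrix.mul_zero, Matrix.zero_mul, add_zero,
      smul_zero, sub_eq_add_neg, fromBlocks_neg, fromBlocks_add, neg_zero]
    congr 1
    simp only [← sub_eq_add_neg, Matrix.mul_sub, Matrix.sub_mul, Matrix.mul_smul, Matrix.smul_mul,
      hDD]
    module
  rw [Matrix.le_iff, hdiff]
  exact posSemidef_fromBlocks_zero key

lemma fromBlocks_le_fromBlocks (hE : (A_FF - D_FF).PosSemidef) :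
    fromBlocks D_FF (-A_FC) (-A_FCᵀ) A_CC ≤ fromBlocks A_FF (-A_FC) (-A_FCᵀ) A_CC := by
  rw [Matrix.le_iff, sub_eq_add_neg, fromBlocks_neg, fromBlocks_add]
  simpa [← sub_eq_add_neg] using posSemidef_fromBlocks_zero (n := C) hE

variable [DecidableEq C]

lemma fromBlocks_mulVec_fromBlocks_inv_mulVec (hD : D_FF.PosDef) {r : F ⊕ C → ℝ}
    (hr : (fromRows (D_FF⁻¹ * A_FC) 1)ᵀ *ᵥ r = 0) :
    fromBlocks D_FF (-A_FC) (-A_FCᵀ) A_CC *ᵥ (fromBlocks D_FF⁻¹ 0 0 0 *ᵥ r) = r := by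
  have hDD : D_FF * D_FF⁻¹ = 1 := mul_nonsing_inv _ ((isUnit_iff_isUnit_det _).mp hD.isUnit)
  have hDinv : D_FF⁻¹ᵀ = D_FF⁻¹ := by simpa using hD.inv.1.eq
  rw [transpose_fromRows, transpose_one, transpose_mul, hDinv] at hr
  ext (i | i)
  · simp only [fromBlocks_mulVec, zero_mulVec, add_zero, Sum.elim_comp_inl, mulVec_mulVec, hDD,
      one_mulVec, Sum.elim_comp_inr, mulVec_zero, Sum.elim_inl, Function.comp_apply]
  · have hri := congrFun hr i
    simp only [fromCols_mulVec, one_mulVec, Pi.add_apply, Function.comp_apply,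
      Pi.zero_apply] at hri
    simp only [fromBlocks_mulVec, zero_mulVec, add_zero, Sum.elim_comp_inl, mulVec_mulVec,
      Sum.elim_comp_inr, mulVec_zero, Matrix.neg_mul, neg_mulVec, Sum.elim_inr, Pi.neg_apply]
    linarith

/-- The approximation property of the interpolation `P`. -/
lemma energy_le_of_transpose_mulVec_eq_zero (hD : D_FF.PosDef) (hE : (A_FF - D_FF).PosSemidef)
    (hDA : (fromBlocks D_FF (-A_FC) (-A_FCᵀ) A_CC).PosSemidef) {s : F ⊕ C → ℝ}
    (hs : (fromRows (D_FF⁻¹ * A_FC) 1)ᵀ *ᵥ (fromBlocks A_FF (-A_FC) (-A_FCᵀ) A_CC *ᵥ s) = 0) :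
    s ⬝ᵥ (fromBlocks A_FF (-A_FC) (-A_FCᵀ) A_CC *ᵥ s)
      ≤ (fromBlocks A_FF (-A_FC) (-A_FCᵀ) A_CC *ᵥ s) ⬝ᵥ
          (fromBlocks D_FF⁻¹ 0 0 0 *ᵥ (fromBlocks A_FF (-A_FC) (-A_FCᵀ) A_CC *ᵥ s)) := by
  have hu := fromBlocks_mulVec_fromBlocks_inv_mulVec (A_CC := A_CC) hD hs
  have h := dotProduct_mulVec_le_of_mulVec_eq hDA (fromBlocks_le_fromBlocks hE) hu
  rwa [hu, dotProduct_comm (fromBlocks D_FF⁻¹ 0 0 0 *ᵥ _)] at h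

end AMGr

theorem amgr_two_grid_convergence_general
    {F C : Type*} [Fintype F] [Fintype C] [DecidableEq F] [DecidableEq C]
    (A_FF D_FF : Matrix F F ℝ) (A_FC : Matrix F C ℝ) (A_CC : Matrix C C ℝ)
    (ε : ℝ) (hε : 0 ≤ ε)
    (hE : (A_FF - D_FF).PosSemidef)
    (hEε : (ε • D_FF - (A_FF - D_FF)).PosSemidef)
    (A : Matrix (F ⊕ C) (F ⊕ C) ℝ)
    (hAdef : A = Matrix.fromBlocks A_FF (-A_FC) (-A_FCᵀ) A_CC)
    (hA : A.PosDef)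
    (hD : (Matrix.fromBlocks D_FF (-A_FC) (-A_FCᵀ) A_CC).PosSemidef)
    (σ : ℝ) (hσ : σ = 2 / (2 + ε))
    (R : Matrix (F ⊕ C) (F ⊕ C) ℝ)
    (hR : R = 1 - σ • (Matrix.fromBlocks D_FF⁻¹ 0 0 0 * A))
    (P : Matrix (F ⊕ C) C ℝ)
    (hP : P = Matrix.fromRows (D_FF⁻¹ * A_FC) 1)
    (T : Matrix (F ⊕ C) (F ⊕ C) ℝ)
    (hT : T = 1 - P * (Pᵀ * A * P)⁻¹ * Pᵀ * A)
    (ν : ℕ) (hν : 1 ≤ ν)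
    (MG : Matrix (F ⊕ C) (F ⊕ C) ℝ)
    (hMG : MG = R ^ ν * T * R ^ ν) :
    (∀ x : F ⊕ C → ℝ,
        (MG *ᵥ x) ⬝ᵥ (A *ᵥ (MG *ᵥ x)) ≤
          ((ε / (1 + ε)) * (1 + ε ^ (2 * ν - 1) / (2 + ε) ^ (2 * ν))) * (x ⬝ᵥ (A *ᵥ x)))
      ∧ (ε / (1 + ε)) * (1 + ε ^ (2 * ν - 1) / (2 + ε) ^ (2 * ν)) < 1 := by
  have hgain := smoothingGain_pos hε hν
  have hgain_le : 0 ≤ 1 - smoothingGain ε ν := amgr_factor_eq hε hν ▸ by positivity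
  rw [amgr_factor_eq hε hν]
  refine ⟨fun x => ?_, by linarith⟩
  have hDpos : D_FF.PosDef := by
    have hAFF : A.toBlocks₁₁.PosDef := hA.submatrix Sum.inl_injective
    rw [hAdef, toBlocks_fromBlocks₁₁] at hAFF
    exact hAFF.of_posSemidef_smul_sub_sub hε hEε
  set M : Matrix (F ⊕ C) (F ⊕ C) ℝ := fromBlocks D_FF⁻¹ 0 0 0
  have hM : M.PosSemidef := posSemidef_fromBlocks_zero hDpos.inv.posSemidef
  have hsmooth : ∀ z, (R ^ ν *ᵥ z) ⬝ᵥ (A *ᵥ (R ^ ν *ᵥ z))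
      ≤ z ⬝ᵥ (A *ᵥ z) - smoothingGain ε ν * ((A *ᵥ z) ⬝ᵥ (M *ᵥ (A *ᵥ z))) := by
    subst hR hσ
    exact energy_one_sub_smul_mul_pow_le hA.posSemidef hM (by linarith)
      (hAdef ▸ fromBlocks_inv_mul_mul_le hDpos hEε) fun d hd => one_sub_mul_pow_le hε hd ν
  have hPAP : IsUnit (Pᵀ * A * P).det :=
    hP ▸ hA.isUnit_det_transpose_mul_mul (fromRows_one_mulVec_injective _)
  set y := R ^ ν *ᵥ x
  set s := coarseGridCorrection A P *ᵥ y
  have hs : Pᵀ *ᵥ (A *ᵥ s) = 0 := by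
    rw [mulVec_mulVec, mulVec_mulVec, transpose_mul_mul_coarseGridCorrection hPAP, zero_mulVec]
  have happrox : s ⬝ᵥ (A *ᵥ s) ≤ (A *ᵥ s) ⬝ᵥ (M *ᵥ (A *ᵥ s)) := by
    subst hAdef hP
    exact energy_le_of_transpose_mulVec_eq_zero hDpos hE hD hs
  have hMx : 0 ≤ (A *ᵥ x) ⬝ᵥ (M *ᵥ (A *ᵥ x)) := by
    simpa using hM.dotProduct_mulVec_nonneg (A *ᵥ x)
  calc (MG *ᵥ x) ⬝ᵥ (A *ᵥ (MG *ᵥ x)) = (R ^ ν *ᵥ s) ⬝ᵥ (A *ᵥ (R ^ ν *ᵥ s)) := by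
        rw [hMG, show T = coarseGridCorrection A P from hT, ← mulVec_mulVec, ← mulVec_mulVec]
    _ ≤ (1 - smoothingGain ε ν) * (s ⬝ᵥ (A *ᵥ s)) := by nlinarith [hsmooth s]
    _ ≤ (1 - smoothingGain ε ν) * (y ⬝ᵥ (A *ᵥ y)) := by
        gcongr
        exact energy_coarseGridCorrection_le hA.posSemidef hPAP y
    _ ≤ (1 - smoothingGain ε ν) * (x ⬝ᵥ (A *ᵥ x)) := by
        gcongr
        nlinarith [hsmooth x]

/-- Two-grid AMGr convergence bound (MacLachlan–Manteuffel–McCormick):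
if `A = [[A_FF, -A_FC], [-A_FCᵀ, A_CC]]` is symmetric positive definite,
`D_FF` is symmetric with `0 ⪯ A_FF - D_FF ⪯ ε • D_FF`, and
`[[D_FF, -A_FC], [-A_FCᵀ, A_CC]] ⪰ 0`, then the two-grid error propagation
operator `MG₂ = R^ν T R^ν` contracts the `A`-norm with factor
`c² = (ε/(1+ε)) (1 + ε^(2ν-1)/(2+ε)^(2ν)) < 1`. -/
theorem amgr_two_grid_convergence
    {F C : Type*} [Fintype F] [Fintype C] [DecidableEq F] [DecidableEq C]
    (A_FF D_FF : Matrix F F ℝ) (A_FC : Matrix F C ℝ) (A_CC : Matrix C C ℝ)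
    (ε : ℝ) (hε : 0 ≤ ε)
    (hDsym : D_FFᵀ = D_FF)
    (hE : (A_FF - D_FF).PosSemidef)
    (hEε : (ε • D_FF - (A_FF - D_FF)).PosSemidef)
    (A : Matrix (F ⊕ C) (F ⊕ C) ℝ)
    (hAdef : A = Matrix.fromBlocks A_FF (-A_FC) (-A_FCᵀ) A_CC)
    (hA : A.PosDef)
    (hD : (Matrix.fromBlocks D_FF (-A_FC) (-A_FCᵀ) A_CC).PosSemidef)
    (σ : ℝ) (hσ : σ = 2 / (2 + ε))
    (R : Matrix (F ⊕ C) (F ⊕ C) ℝ)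
    (hR : R = 1 - σ • (Matrix.fromBlocks D_FF⁻¹ 0 0 0 * A))
    (P : Matrix (F ⊕ C) C ℝ)
    (hP : P = Matrix.fromRows (D_FF⁻¹ * A_FC) 1)
    (T : Matrix (F ⊕ C) (F ⊕ C) ℝ)
    (hT : T = 1 - P * (Pᵀ * A * P)⁻¹ * Pᵀ * A)
    (ν : ℕ) (hν : 1 ≤ ν)
    (MG : Matrix (F ⊕ C) (F ⊕ C) ℝ)
    (hMG : MG = R ^ ν * T * R ^ ν) :
    (∀ x : F ⊕ C → ℝ,
        (MG *ᵥ x) ⬝ᵥ (A *ᵥ (MG *ᵥ x)) ≤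
          ((ε / (1 + ε)) * (1 + ε ^ (2 * ν - 1) / (2 + ε) ^ (2 * ν))) * (x ⬝ᵥ (A *ᵥ x)))
      ∧ (ε / (1 + ε)) * (1 + ε ^ (2 * ν - 1) / (2 + ε) ^ (2 * ν)) < 1 :=
  amgr_two_grid_convergence_general A_FF D_FF A_FC A_CC ε hε hE hEε A hAdef hA hD σ hσ R hR P hP T
    hT ν hν MG hMG
end

section
/- Let A_FF be a real symmetric n×n matrix with strictly positive diagonal entries that is η-diagonally dominant for some real η with 1/2 < η ≤ 1; that is, for every index i, A_ii ≥ η·Σ_j |A_ij| (the sum over all j, including j = i). Let D be the diagonal matrix with entries D_ii = (2 - 1/η)·A_ii. Then E := A_FF - D is positive semidefinite. -/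
open Matrix
open scoped ComplexOrder

/-!
`E` has the off-diagonal entries of `A` and diagonal entries `(1/η - 1) A_ii`, so the
`η`-dominance of `A` says exactly that each row of `E` is weakly diagonally dominant. By
Gershgorin's circle theorem every eigenvalue of `E` then lies in a disc contained in the closed
right half-plane, and a Hermitian matrix with nonnegative eigenvalues is positive semidefinite.
-/

theorem Matrix.IsHermitian.posSemidef_of_sum_norm_offDiag_le_re_diag
    {𝕜 n : Type*} [RCLike 𝕜] [Fintype n] [DecidableEq n] {A : Matrix n n 𝕜}
    (hA : A.IsHermitian) (hdom : ∀ i, ∑ j ∈ Finset.univ.erase i, ‖A i j‖ ≤ RCLike.re (A i i)) :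
    A.PosSemidef := by
  refine hA.posSemidef_iff_eigenvalues_nonneg.mpr fun i => show 0 ≤ hA.eigenvalues i from ?_
  have hμ : Module.End.HasEigenvalue (toLin' A) (hA.eigenvalues i : 𝕜) := by
    rw [Module.End.hasEigenvalue_iff_mem_spectrum, spectrum_toLin', ← RCLike.algebraMap_eq_ofReal,
      spectrum.algebraMap_mem_iff]
    exact hA.eigenvalues_mem_spectrum_real i
  obtain ⟨k, hk⟩ := eigenvalue_mem_ball hμ
  rw [Metric.mem_closedBall, dist_comm, dist_eq_norm] at hk
  have hre : RCLike.re (A k k) - hA.eigenvalues i ≤ ‖A k k - (hA.eigenvalues i : 𝕜)‖ := by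
    simpa using RCLike.re_le_norm (A k k - (hA.eigenvalues i : 𝕜))
  linarith [hdom k]

theorem sum_erase_abs_le_of_mul_sum_abs_le {ι : Type*} [Fintype ι] [DecidableEq ι]
    {η : ℝ} (hη : 0 < η) {a : ι → ℝ} {i : ι} (h : η * ∑ j, |a j| ≤ a i) :
    ∑ j ∈ Finset.univ.erase i, |a j| ≤ (1 / η - 1) * a i := by
  have hsum : ∑ j, |a j| = |a i| + ∑ j ∈ Finset.univ.erase i, |a j| :=
    (Finset.add_sum_erase _ _ (Finset.mem_univ i)).symm
  have hrest : 0 ≤ ∑ j ∈ Finset.univ.erase i, |a j| := Finset.sum_nonneg fun j _ => abs_nonneg _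
  have hai : 0 ≤ a i := le_trans (by positivity) h
  rw [hsum, abs_of_nonneg hai] at h
  rw [sub_mul, one_div_mul_eq_div, le_sub_iff_add_le, le_div_iff₀ hη]
  linarith

theorem amgr_lower_bound_posSemidef_general
    {n : Type*} [Fintype n] [DecidableEq n]
    (A : Matrix n n ℝ) (hsym : Aᵀ = A)
    (η : ℝ) (hη₁ : 1 / 2 < η)
    (hdd : ∀ i, η * ∑ j, |A i j| ≤ A i i) :
    (A - Matrix.diagonal (fun i => (2 - 1 / η) * A i i)).PosSemidef := by
  have hA : A.IsHermitian := by rwa [IsHermitian, conjTranspose_eq_transpose_of_trivial]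
  refine (hA.sub (isHermitian_diagonal _)).posSemidef_of_sum_norm_offDiag_le_re_diag fun i => ?_
  have hoff : ∀ j ∈ Finset.univ.erase i,
      ‖(A - diagonal fun i => (2 - 1 / η) * A i i) i j‖ = |A i j| := fun j hj => by
    simp [diagonal_apply_ne' _ (Finset.ne_of_mem_erase hj)]
  rw [Finset.sum_congr rfl hoff, Matrix.sub_apply, diagonal_apply_eq, RCLike.re_to_real]
  calc ∑ j ∈ Finset.univ.erase i, |A i j| ≤ (1 / η - 1) * A i i :=
        sum_erase_abs_le_of_mul_sum_abs_le (by linarith) (hdd i)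
    _ = A i i - (2 - 1 / η) * A i i := by ring

/-- If the symmetric matrix `A_FF` with positive diagonal is `η`-diagonally
dominant for some `1/2 < η ≤ 1`, then `E := A_FF - D` with
`D = diagonal ((2 - 1/η) * A_ii)` is positive semidefinite. -/
theorem amgr_lower_bound_posSemidef
    {n : Type*} [Fintype n] [DecidableEq n]
    (A : Matrix n n ℝ) (hsym : Aᵀ = A)
    (hdiag : ∀ i, 0 < A i i)
    (η : ℝ) (hη₁ : 1 / 2 < η) (hη₂ : η ≤ 1)
    (hdd : ∀ i, η * ∑ j, |A i j| ≤ A i i) :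
    (A - Matrix.diagonal (fun i => (2 - 1 / η) * A i i)).PosSemidef :=
  amgr_lower_bound_posSemidef_general A hsym η hη₁ hdd
end

section
/- Let A_FF be a real symmetric n×n matrix with strictly positive diagonal entries that is η-diagonally dominant for some real η with 1/2 < η ≤ 1; that is, for every index i, A_ii ≥ η·Σ_j |A_ij| (the sum over all j, including j = i). Let D be the diagonal matrix with entries D_ii = (2 - 1/η)·A_ii and set E := A_FF - D. Then ((2-2η)/(2η-1))·D - E is positive semidefinite, i.e., E ⪯ ((2-2η)/(2η-1))·D. -/
/-!
The matrix `((2 - 2η)/(2η - 1)) • D - (A - D)` simplifies to `diag(A_ii / η) - A`. Row `i` of it has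
diagonal entry `A_ii / η - A_ii` and off-diagonal absolute sum `∑_{j ≠ i} |A_ij|`, so η-dominance makes
it weakly diagonally dominant; by Gershgorin's circle theorem its real eigenvalues are then nonnegative.
-/

open Matrix
open scoped ComplexOrder

namespace Matrix

variable {n 𝕜 : Type*} [Fintype n] [DecidableEq n] [RCLike 𝕜]

theorem IsHermitian.posSemidef_of_sum_norm_offDiag_le {M : Matrix n n 𝕜} (hM : M.IsHermitian)
    (hdd : ∀ i, ∑ j ∈ Finset.univ.erase i, ‖M i j‖ ≤ RCLike.re (M i i)) : M.PosSemidef := by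
  rw [hM.posSemidef_iff_eigenvalues_nonneg]
  intro i
  show 0 ≤ hM.eigenvalues i
  have hμ : Module.End.HasEigenvalue (toLin' M) (hM.eigenvalues i : 𝕜) := by
    rw [Module.End.hasEigenvalue_iff_mem_spectrum, spectrum_toLin']
    exact spectrum.algebraMap_mem 𝕜 (hM.eigenvalues_mem_spectrum_real i)
  obtain ⟨k, hk⟩ := eigenvalue_mem_ball hμ
  rw [Metric.mem_closedBall, dist_eq_norm] at hk
  have hre := neg_le_of_abs_le (RCLike.abs_re_le_norm ((hM.eigenvalues i : 𝕜) - M k k))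
  rw [map_sub, RCLike.ofReal_re] at hre
  linarith [hdd k]

theorem IsHermitian.posSemidef_diagonal_sub_of_sum_norm_le {A : Matrix n n 𝕜}
    (hA : A.IsHermitian) {d : n → ℝ} (hd : ∀ i, ∑ j, ‖A i j‖ ≤ d i) :
    (diagonal (fun i => (d i : 𝕜)) - A).PosSemidef := by
  refine ((isHermitian_diagonal_of_self_adjoint _ ?_).sub hA).posSemidef_of_sum_norm_offDiag_le
    fun i => ?_
  · ext i; simp
  have hoff : ∑ j ∈ Finset.univ.erase i, ‖(diagonal (fun i => (d i : 𝕜)) - A) i j‖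
      = ∑ j ∈ Finset.univ.erase i, ‖A i j‖ :=
    Finset.sum_congr rfl fun j hj => by
      rw [sub_apply, diagonal_apply_ne _ (Finset.ne_of_mem_erase hj).symm, zero_sub, norm_neg]
  have hrow := hd i
  rw [← Finset.add_sum_erase _ _ (Finset.mem_univ i)] at hrow
  rw [hoff, sub_apply, diagonal_apply_eq, map_sub, RCLike.ofReal_re]
  linarith [RCLike.re_le_norm (A i i)]

end Matrix

theorem amgr_upper_bound_posSemidef_general
    {n : Type*} [Fintype n] [DecidableEq n]
    (A : Matrix n n ℝ) (hsym : Aᵀ = A)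
    (η : ℝ) (hη₁ : 1 / 2 < η)
    (hdd : ∀ i, η * ∑ j, |A i j| ≤ A i i)
    (D : Matrix n n ℝ)
    (hD : D = Matrix.diagonal (fun i => (2 - 1 / η) * A i i)) :
    (((2 - 2 * η) / (2 * η - 1)) • D - (A - D)).PosSemidef := by
  have hη : 0 < η := by linarith
  have hM : ((2 - 2 * η) / (2 * η - 1)) • D - (A - D) = diagonal (fun i => A i i / η) - A := by
    have : 2 * η - 1 ≠ 0 := by linarith
    subst hD
    ext i j
    rcases eq_or_ne i j with rfl | hij
    · simp only [Matrix.sub_apply, Matrix.smul_apply, diagonal_apply_eq, smul_eq_mul]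
      field_simp
      ring
    · simp [diagonal_apply_ne _ hij]
  rw [hM]
  exact IsHermitian.posSemidef_diagonal_sub_of_sum_norm_le (d := fun i => A i i / η)
    (by simpa [IsHermitian] using hsym) fun i => by
      rw [le_div_iff₀ hη, mul_comm]
      simpa using hdd i

/-- If the symmetric matrix `A_FF` with positive diagonal is `η`-diagonally
dominant for some `1/2 < η ≤ 1`, then `E := A_FF - D` with
`D = diagonal ((2 - 1/η) * A_ii)` satisfies `E ⪯ ((2-2η)/(2η-1)) • D`. -/
theorem amgr_upper_bound_posSemidef
    {n : Type*} [Fintype n] [DecidableEq n]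
    (A : Matrix n n ℝ) (hsym : Aᵀ = A)
    (hdiag : ∀ i, 0 < A i i)
    (η : ℝ) (hη₁ : 1 / 2 < η) (hη₂ : η ≤ 1)
    (hdd : ∀ i, η * ∑ j, |A i j| ≤ A i i)
    (D : Matrix n n ℝ)
    (hD : D = Matrix.diagonal (fun i => (2 - 1 / η) * A i i)) :
    (((2 - 2 * η) / (2 * η - 1)) • D - (A - D)).PosSemidef :=
  amgr_upper_bound_posSemidef_general A hsym η hη₁ hdd D hD
end

section
/- Let A be a real symmetric n×n matrix with nonnegative diagonal entries that is (weakly) diagonally dominant: A_ii ≥ Σ_{j≠i} |A_ij| for every i. Let F be a subset of the index set. Define the matrix M by: M_ii = 2·A_ii - Σ_{j∈F} |A_ij| for i ∈ F (the sum over j ∈ F including j = i when i ∈ F); M_ij = 0 whenever i ≠ j and both i ∈ F and j ∈ F; and M_ij = A_ij in all other positions. Then M is positive semidefinite. -/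
/-!
`M` is symmetric and again weakly diagonally dominant: in a row `i ∈ F` the off-diagonal mass
left is `∑_{j ∉ F} |A_ij|`, and `∑_{j ∉ F} |A_ij| + ∑_{j ∈ F} |A_ij| = ∑_j |A_ij| ≤ 2 A_ii`.
By Gershgorin's circle theorem every eigenvalue of a symmetric, weakly diagonally dominant real
matrix is nonnegative, so `M` is positive semidefinite.
-/

open Matrix Finset

namespace Matrix

variable {n : Type*} [Fintype n] [DecidableEq n]

theorem IsHermitian.posSemidef_of_diagDominant {A : Matrix n n ℝ} (hA : A.IsHermitian)
    (hdd : ∀ i, ∑ j ∈ univ.erase i, |A i j| ≤ A i i) : A.PosSemidef := by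
  refine hA.posSemidef_iff_eigenvalues_nonneg.mpr fun i => ?_
  rw [Pi.zero_apply]
  have hμ : Module.End.HasEigenvalue (toLin' A) (hA.eigenvalues i) := by
    rw [Module.End.hasEigenvalue_iff_mem_spectrum, spectrum_toLin']
    exact hA.eigenvalues_mem_spectrum_real i
  obtain ⟨k, hk⟩ := eigenvalue_mem_ball hμ
  rw [Metric.mem_closedBall, Real.dist_eq] at hk
  simp only [Real.norm_eq_abs] at hk
  linarith [neg_abs_le (hA.eigenvalues i - A k k), hdd k]

end Matrix

theorem sum_abs_le_two_mul_of_sum_erase_abs_le {n : Type*} [Fintype n] [DecidableEq n]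
    (a : n → ℝ) (i : n) (h : ∑ j ∈ univ.erase i, |a j| ≤ a i) : ∑ j, |a j| ≤ 2 * a i := by
  have hai : 0 ≤ a i := (sum_nonneg fun j _ => abs_nonneg (a j)).trans h
  rw [← add_sum_erase _ _ (mem_univ i), abs_of_nonneg hai]
  linarith

/-- The AMGr matrix `[[D_FF, -A_FC], [-A_FCᵀ, A_CC]]`. -/
def amgrReplacedBlock {n : Type*} [DecidableEq n] (A : Matrix n n ℝ) (F : Finset n) :
    Matrix n n ℝ := fun i j =>
  if i ∈ F ∧ j ∈ F then (if i = j then 2 * A i i - ∑ k ∈ F, |A i k| else 0) else A i j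

section amgrReplacedBlock

variable {n : Type*} [DecidableEq n] {A : Matrix n n ℝ} {F : Finset n}

theorem amgrReplacedBlock_isSymm (hA : A.IsSymm) : (amgrReplacedBlock A F).IsSymm := by
  refine IsSymm.ext fun i j => ?_
  by_cases hij : i = j
  · rw [hij]
  · simp only [amgrReplacedBlock, and_comm, hij, Ne.symm hij, if_false, hA.apply]

theorem amgrReplacedBlock_diagDominant [Fintype n]
    (hdd : ∀ i, ∑ j ∈ univ.erase i, |A i j| ≤ A i i) (i : n) :
    ∑ j ∈ univ.erase i, |amgrReplacedBlock A F i j| ≤ amgrReplacedBlock A F i i := by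
  by_cases hi : i ∈ F
  · have hoff : ∑ j ∈ univ \ F, |A i j| = ∑ j ∈ univ.erase i, |amgrReplacedBlock A F i j| := by
      refine sum_subset_zero_on_sdiff (fun j hj => ?_) (fun j hj => ?_) (fun j hj => ?_)
      · exact mem_erase.mpr ⟨fun h => (mem_sdiff.mp hj).2 (h ▸ hi), mem_univ j⟩
      · obtain ⟨hji, -⟩ := mem_erase.mp (mem_sdiff.mp hj).1
        have hjF : j ∈ F := by simpa using (mem_sdiff.mp hj).2
        simp [amgrReplacedBlock, hi, hjF, Ne.symm hji]
      · simp [amgrReplacedBlock, (mem_sdiff.mp hj).2]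
    have hsplit := sum_sdiff (subset_univ F) (f := fun j => |A i j|)
    have hrow := sum_abs_le_two_mul_of_sum_erase_abs_le (A i) i (hdd i)
    have hdiag : amgrReplacedBlock A F i i = 2 * A i i - ∑ k ∈ F, |A i k| := by
      simp [amgrReplacedBlock, hi]
    rw [← hoff, hdiag]
    linarith
  · simpa [amgrReplacedBlock, hi] using hdd i

end amgrReplacedBlock

theorem amgr_replaced_block_posSemidef_general
    {n : Type*} [Fintype n] [DecidableEq n]
    (A : Matrix n n ℝ) (hsym : Aᵀ = A)
    (hdd : ∀ i, ∑ j ∈ Finset.univ.erase i, |A i j| ≤ A i i)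
    (F : Finset n)
    (M : Matrix n n ℝ)
    (hM : M = fun i j =>
      if i ∈ F ∧ j ∈ F then
        (if i = j then 2 * A i i - ∑ k ∈ F, |A i k| else 0)
      else A i j) :
    M.PosSemidef := by
  rw [show M = amgrReplacedBlock A F from hM]
  exact (isHermitian_iff_isSymm.mpr (amgrReplacedBlock_isSymm hsym)).posSemidef_of_diagDominant
    (amgrReplacedBlock_diagDominant hdd)

/-- For a symmetric, weakly diagonally dominant matrix `A` with nonnegative
diagonal and a subset `F` of its indices, the matrix `M` obtained from `A` by
replacing the `F`-`F` block with the diagonal matrix with entries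
`2 A_ii - ∑_{j ∈ F} |A_ij|` is positive semidefinite.  (In AMGr block notation,
`M = [[D_FF, -A_FC], [-A_FCᵀ, A_CC]]`.) -/
theorem amgr_replaced_block_posSemidef
    {n : Type*} [Fintype n] [DecidableEq n]
    (A : Matrix n n ℝ) (hsym : Aᵀ = A)
    (hdiag : ∀ i, 0 ≤ A i i)
    (hdd : ∀ i, ∑ j ∈ Finset.univ.erase i, |A i j| ≤ A i i)
    (F : Finset n)
    (M : Matrix n n ℝ)
    (hM : M = fun i j =>
      if i ∈ F ∧ j ∈ F then
        (if i = j then 2 * A i i - ∑ k ∈ F, |A i k| else 0)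
      else A i j) :
    M.PosSemidef :=
  amgr_replaced_block_posSemidef_general A hsym hdd F M hM
end

section
/- Let A be a real symmetric positive-definite n×n matrix with nonnegative diagonal that is (weakly) diagonally dominant: A_ii ≥ Σ_{j≠i}|A_ij| for every i. Let F be a subset of the index set such that the principal submatrix A_FF is η-diagonally dominant for some η with 1/2 < η ≤ 1, i.e., A_ii ≥ η·Σ_{j∈F}|A_ij| for every i ∈ F. Define the diagonal matrix D_FF with row-wise entries (D_FF)_ii = 2·A_ii - Σ_{j∈F}|A_ij| for i ∈ F, and set E := A_FF - D_FF and ε := (2-2η)/(2η-1). Then all hypotheses of the AMGr convergence theorem are satisfied: (i) E is positive semidefinite; (ii) ε·D_FF - E is positive semidefinite; and (iii) the matrix obtained from A by replacing the F-F block with D_FF (keeping all other entries of A) is positive semidefinite. -/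
/-!
All three matrices are symmetric and weakly diagonally dominant, hence positive semidefinite by
Gershgorin's circle theorem. For `E` the dominance holds with equality in every row. For
`ε • D_FF - E` the diagonal is `-A_ii + (ε + 1) (D_FF)_ii` with `ε + 1 = 1 / (2η - 1)`, and the
dominance becomes `η`-dominance of `A_FF`. In an `F`-row of the modified matrix, the diagonal
entry and the off-diagonal row sum both drop by `∑_{j ∈ F, j ≠ i} |A_ij|`, so the dominance of
`A` carries over.
-/

open Matrix

section DiagDominant

open scoped ComplexOrder

variable {n 𝕜 : Type*} [Fintype n] [DecidableEq n] [RCLike 𝕜]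

theorem Matrix.IsHermitian.hasEigenvalue_eigenvalues {A : Matrix n n 𝕜} (hA : A.IsHermitian)
    (i : n) : Module.End.HasEigenvalue (toLin' A) (hA.eigenvalues i : 𝕜) := by
  refine Module.End.hasEigenvalue_of_hasEigenvector (x := ⇑(hA.eigenvectorBasis i)) ⟨?_, ?_⟩
  · rw [Module.End.mem_eigenspace_iff, toLin'_apply, hA.mulVec_eigenvectorBasis,
      RCLike.real_smul_eq_coe_smul (K := 𝕜)]
  · simpa using hA.eigenvectorBasis.orthonormal.ne_zero i

theorem Matrix.IsHermitian.posSemidef_of_diagDominant_s6 {A : Matrix n n 𝕜} (hA : A.IsHermitian)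
    (h : ∀ i, ∑ j ∈ Finset.univ.erase i, ‖A i j‖ ≤ RCLike.re (A i i)) : A.PosSemidef := by
  rw [hA.posSemidef_iff_eigenvalues_nonneg]
  intro i
  obtain ⟨k, hk⟩ := eigenvalue_mem_ball (hA.hasEigenvalue_eigenvalues i)
  rw [Metric.mem_closedBall, dist_comm, dist_eq_norm] at hk
  have hre : RCLike.re (A k k) - hA.eigenvalues i ≤ ‖A k k - (hA.eigenvalues i : 𝕜)‖ := by
    simpa using RCLike.re_le_norm (A k k - (hA.eigenvalues i : 𝕜))
  simpa using hre.trans (hk.trans (h k))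

theorem Matrix.IsHermitian.posSemidef_add_diagonal_of_diagDominant {B : Matrix n n ℝ}
    (hB : B.IsHermitian) {d : n → ℝ}
    (h : ∀ i, ∑ j ∈ Finset.univ.erase i, |B i j| ≤ B i i + d i) :
    (B + diagonal d).PosSemidef := by
  refine (hB.add (isHermitian_diagonal d)).posSemidef_of_diagDominant_s6 fun i => ?_
  rw [Finset.sum_congr rfl fun j hj => by
    rw [add_apply, diagonal_apply_ne _ (Finset.ne_of_mem_erase hj).symm, add_zero]]
  simpa using h i

end DiagDominant

section AMGr

variable {n : Type*} [DecidableEq n] {A : Matrix n n ℝ} {F : Finset n}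

def amgrDiagonal (A : Matrix n n ℝ) (F : Finset n) : F → ℝ :=
  fun i => 2 * A i i - ∑ k ∈ F, |A i k|

theorem sum_erase_abs_submatrix_val (hdiag : ∀ i, 0 ≤ A i i) (i : F) :
    ∑ j ∈ Finset.univ.erase i, |A i j| = ∑ k ∈ F, |A i k| - A i i := by
  rw [Finset.sum_erase_eq_sub (Finset.mem_univ i), Finset.sum_coe_sort F (fun k => |A i k|),
    abs_of_nonneg (hdiag i)]

theorem posSemidef_submatrix_sub_amgrDiagonal (hA : A.IsHermitian) (hdiag : ∀ i, 0 ≤ A i i) :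
    (A.submatrix Subtype.val Subtype.val - diagonal (amgrDiagonal A F)).PosSemidef := by
  rw [sub_eq_add_neg, diagonal_neg]
  refine (hA.submatrix _).posSemidef_add_diagonal_of_diagDominant fun i => ?_
  simp only [submatrix_apply, amgrDiagonal, sum_erase_abs_submatrix_val hdiag i]
  linarith

theorem posSemidef_smul_amgrDiagonal_sub (hA : A.IsHermitian) (hdiag : ∀ i, 0 ≤ A i i)
    {η : ℝ} (hη : 1 / 2 < η) (hηdd : ∀ i ∈ F, η * ∑ j ∈ F, |A i j| ≤ A i i) :
    (((2 - 2 * η) / (2 * η - 1)) • diagonal (amgrDiagonal A F) -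
      (A.submatrix Subtype.val Subtype.val - diagonal (amgrDiagonal A F))).PosSemidef := by
  have hε : (2 - 2 * η) / (2 * η - 1) + 1 = (2 * η - 1)⁻¹ := by
    rw [div_add_one (by linarith), inv_eq_one_div]
    ring_nf
  have hD : ((2 - 2 * η) / (2 * η - 1)) • diagonal (amgrDiagonal A F)
        - (A.submatrix Subtype.val Subtype.val - diagonal (amgrDiagonal A F))
      = -A.submatrix Subtype.val Subtype.val
        + diagonal ((2 * η - 1)⁻¹ • amgrDiagonal A F) := by
    rw [← hε]
    ext i j
    by_cases hij : i = j
    · subst hij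
      simp only [Matrix.sub_apply, Matrix.smul_apply, Matrix.add_apply, Matrix.neg_apply,
        diagonal_apply_eq, smul_eq_mul, Pi.smul_apply]
      ring
    · simp [hij]
  rw [hD]
  refine (hA.submatrix _).neg.posSemidef_add_diagonal_of_diagDominant fun i => ?_
  simp only [Matrix.neg_apply, abs_neg, submatrix_apply, sum_erase_abs_submatrix_val hdiag i,
    Pi.smul_apply, smul_eq_mul, amgrDiagonal]
  have hrow : ∑ k ∈ F, |A i k| ≤ (2 * A i i - ∑ k ∈ F, |A i k|) / (2 * η - 1) := by
    rw [le_div_iff₀ (by linarith)]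
    linarith [hηdd i i.2]
  rw [← div_eq_inv_mul]
  linarith

theorem posSemidef_replace_block_by_amgrDiagonal [Fintype n] (hA : A.IsHermitian)
    (hdiag : ∀ i, 0 ≤ A i i) (hdd : ∀ i, ∑ j ∈ Finset.univ.erase i, |A i j| ≤ A i i) :
    (Matrix.of fun i j => if i ∈ F ∧ j ∈ F then
      (if i = j then 2 * A i i - ∑ k ∈ F, |A i k| else 0) else A i j).PosSemidef := by
  set M : Matrix n n ℝ := Matrix.of fun i j => if i ∈ F ∧ j ∈ F then
      (if i = j then 2 * A i i - ∑ k ∈ F, |A i k| else 0) else A i j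
  refine IsHermitian.posSemidef_of_diagDominant_s6 ?_ fun i => ?_
  · refine IsHermitian.ext fun i j => ?_
    by_cases hij : i = j
    · subst hij
      rfl
    · simp [M, and_comm, hij, Ne.symm hij, ← hA.apply i j]
  · simp only [Real.norm_eq_abs, RCLike.re_to_real]
    by_cases hi : i ∈ F
    · have hrow : ∑ j ∈ Finset.univ.erase i, |M i j| = ∑ j ∈ Fᶜ, |A i j| := by
        rw [← Finset.sum_subset (s₁ := Fᶜ)]
        · exact Finset.sum_congr rfl fun j hj => by simp [M, Finset.mem_compl.1 hj]
        · intro j hj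
          simp only [Finset.mem_erase, Finset.mem_univ, and_true]
          rintro rfl
          exact Finset.mem_compl.1 hj hi
        · intro j hj hjF
          simp only [Finset.mem_compl, not_not] at hjF
          simp [M, hi, hjF, Ne.symm (Finset.ne_of_mem_erase hj)]
      have hsplit := Finset.sum_compl_add_sum F (fun j => |A i j|)
      rw [← Finset.add_sum_erase _ _ (Finset.mem_univ i), abs_of_nonneg (hdiag i)] at hsplit
      have hMii : M i i = 2 * A i i - ∑ k ∈ F, |A i k| := by simp [M, hi]
      linarith [hdd i]
    · simpa [M, hi] using hdd i

end AMGr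

theorem amgr_hypotheses_satisfied_general
    {n : Type*} [Fintype n] [DecidableEq n]
    (A : Matrix n n ℝ) (hsym : Aᵀ = A)
    (hdiag : ∀ i, 0 ≤ A i i)
    (hdd : ∀ i, ∑ j ∈ Finset.univ.erase i, |A i j| ≤ A i i)
    (F : Finset n)
    (η : ℝ) (hη₁ : 1 / 2 < η)
    (hηdd : ∀ i ∈ F, η * ∑ j ∈ F, |A i j| ≤ A i i)
    (A_FF D_FF : Matrix ↥F ↥F ℝ)
    (hAFF : A_FF = A.submatrix (Subtype.val) (Subtype.val))
    (hDFF : D_FF = Matrix.diagonal (fun i : ↥F => 2 * A i i - ∑ k ∈ F, |A i k|))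
    (ε : ℝ) (hεdef : ε = (2 - 2 * η) / (2 * η - 1))
    (M : Matrix n n ℝ)
    (hM : M = fun i j =>
      if i ∈ F ∧ j ∈ F then
        (if i = j then 2 * A i i - ∑ k ∈ F, |A i k| else 0)
      else A i j) :
    (A_FF - D_FF).PosSemidef
      ∧ (ε • D_FF - (A_FF - D_FF)).PosSemidef
      ∧ M.PosSemidef := by
  have hA : A.IsHermitian := by rwa [IsHermitian, conjTranspose_eq_transpose_of_trivial]
  subst hAFF hDFF hεdef hM
  exact ⟨posSemidef_submatrix_sub_amgrDiagonal hA hdiag,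
    posSemidef_smul_amgrDiagonal_sub hA hdiag hη₁ hηdd,
    posSemidef_replace_block_by_amgrDiagonal hA hdiag hdd⟩

/-- A symmetric, positive-definite, weakly diagonally dominant matrix `A`
whose `F`-`F` block is `η`-diagonally dominant (with `1/2 < η ≤ 1`) satisfies
all hypotheses of the two-grid AMGr convergence theorem with
`ε = (2-2η)/(2η-1)` and `D_FF = diagonal (2 A_ii - ∑_{j∈F} |A_ij|)`:
(i) `E = A_FF - D_FF ⪰ 0`; (ii) `ε • D_FF - E ⪰ 0`; (iii) the matrix obtained
from `A` by replacing the `F`-`F` block with `D_FF` is positive semidefinite. -/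
theorem amgr_hypotheses_satisfied
    {n : Type*} [Fintype n] [DecidableEq n]
    (A : Matrix n n ℝ) (hsym : Aᵀ = A) (hposdef : A.PosDef)
    (hdiag : ∀ i, 0 ≤ A i i)
    (hdd : ∀ i, ∑ j ∈ Finset.univ.erase i, |A i j| ≤ A i i)
    (F : Finset n)
    (η : ℝ) (hη₁ : 1 / 2 < η) (hη₂ : η ≤ 1)
    (hηdd : ∀ i ∈ F, η * ∑ j ∈ F, |A i j| ≤ A i i)
    (A_FF D_FF : Matrix ↥F ↥F ℝ)
    (hAFF : A_FF = A.submatrix (Subtype.val) (Subtype.val))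
    (hDFF : D_FF = Matrix.diagonal (fun i : ↥F => 2 * A i i - ∑ k ∈ F, |A i k|))
    (ε : ℝ) (hεdef : ε = (2 - 2 * η) / (2 * η - 1))
    (M : Matrix n n ℝ)
    (hM : M = fun i j =>
      if i ∈ F ∧ j ∈ F then
        (if i = j then 2 * A i i - ∑ k ∈ F, |A i k| else 0)
      else A i j) :
    (A_FF - D_FF).PosSemidef
      ∧ (ε • D_FF - (A_FF - D_FF)).PosSemidef
      ∧ M.PosSemidef :=
  amgr_hypotheses_satisfied_general A hsym hdiag hdd F η hη₁ hηdd A_FF D_FF hAFF hDFF ε hεdef M hM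
end

section
/- Let A be a real square matrix with block structure A = [[A_FF, -A_FC], [-A_CF, A_CC]] with respect to a partition of its index set into F and C, let b = (b_F, b_C), and suppose A_FF and the Schur complement S := A_CC - A_CF A_FF^{-1} A_FC are invertible. For an arbitrary vector x⁰ = (x⁰_F, x⁰_C), define: x^{1/2}_F = x⁰_F + A_FF^{-1}(b_F - A_FF x⁰_F + A_FC x⁰_C); y_C = S^{-1}(b_C + A_CF x^{1/2}_F - A_CC x⁰_C); x¹_C = x⁰_C + y_C; and x¹_F = x^{1/2}_F + A_FF^{-1} A_FC y_C. Then A x¹ = b, where x¹ = (x¹_F, x¹_C); that is, one iteration of the exact multigrid-reduction cycle produces the exact solution regardless of the initial guess. -/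
open Matrix

/-- One iteration of the exact multigrid-reduction cycle (exact F-relaxation,
exact Schur-complement coarse solve, coarse update, ideal interpolation)
produces the exact solution of `A x = b` for any initial guess `x⁰`. -/
theorem multigrid_reduction_exact
    {F C : Type*} [Fintype F] [Fintype C] [DecidableEq F] [DecidableEq C]
    (A_FF : Matrix F F ℝ) (A_FC : Matrix F C ℝ) (A_CF : Matrix C F ℝ)
    (A_CC : Matrix C C ℝ)
    (hFF : IsUnit A_FF.det)
    (S : Matrix C C ℝ) (hS : S = A_CC - A_CF * A_FF⁻¹ * A_FC)
    (hSinv : IsUnit S.det)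
    (b_F : F → ℝ) (b_C : C → ℝ)
    (x0_F : F → ℝ) (x0_C : C → ℝ)
    (xh_F : F → ℝ)
    (hxh : xh_F = x0_F + A_FF⁻¹ *ᵥ (b_F - A_FF *ᵥ x0_F + A_FC *ᵥ x0_C))
    (y_C : C → ℝ)
    (hy : y_C = S⁻¹ *ᵥ (b_C + A_CF *ᵥ xh_F - A_CC *ᵥ x0_C))
    (x1_C : C → ℝ) (hx1C : x1_C = x0_C + y_C)
    (x1_F : F → ℝ) (hx1F : x1_F = xh_F + (A_FF⁻¹ * A_FC) *ᵥ y_C) :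
    Matrix.fromBlocks A_FF (-A_FC) (-A_CF) A_CC *ᵥ Sum.elim x1_F x1_C
      = Sum.elim b_F b_C := by
  have hA : A_FF * A_FF⁻¹ = 1 := A_FF.mul_nonsing_inv hFF
  have hAinv : ∀ v, A_FF *ᵥ (A_FF⁻¹ *ᵥ v) = v := by
    intro v; rw [mulVec_mulVec, hA, one_mulVec]
  have hSv : S *ᵥ y_C = b_C + A_CF *ᵥ xh_F - A_CC *ᵥ x0_C := by
    rw [hy, mulVec_mulVec, S.mul_nonsing_inv hSinv, one_mulVec]
  have hxhF : A_FF *ᵥ xh_F = b_F + A_FC *ᵥ x0_C := by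
    rw [hxh, mulVec_add, hAinv]
    abel
  have hP : A_FF *ᵥ ((A_FF⁻¹ * A_FC) *ᵥ y_C) = A_FC *ᵥ y_C := by
    rw [mulVec_mulVec, ← Matrix.mul_assoc, hA, Matrix.one_mul]
  have hQ : A_CF *ᵥ ((A_FF⁻¹ * A_FC) *ᵥ y_C)
      = (A_CF * A_FF⁻¹ * A_FC) *ᵥ y_C := by
    rw [mulVec_mulVec, Matrix.mul_assoc]
  have hF : A_FF *ᵥ x1_F + (-A_FC) *ᵥ x1_C = b_F := by
    rw [hx1F, hx1C, mulVec_add, hP, neg_mulVec, mulVec_add, hxhF]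
    abel
  have hC : (-A_CF) *ᵥ x1_F + A_CC *ᵥ x1_C = b_C := by
    have hSy := hSv
    rw [hS, sub_mulVec] at hSy
    rw [hx1F, hx1C, neg_mulVec, mulVec_add, hQ, mulVec_add]
    have : A_CC *ᵥ y_C - (A_CF * A_FF⁻¹ * A_FC) *ᵥ y_C
        = b_C + A_CF *ᵥ xh_F - A_CC *ᵥ x0_C := hSy
    linear_combination (norm := abel) this
  rw [fromBlocks_mulVec]
  simp only [Sum.elim_comp_inl, Sum.elim_comp_inr, hF, hC]
end

section
/- Let D and A_FF be real symmetric positive-definite matrices of the same size and ε ≥ 0 a real number such that D ⪯ A_FF ⪯ (1+ε)·D. Set σ = 2/(2+ε). Then the weighted relaxation error-propagation matrix I - σ·D^{-1}A_FF is a contraction in the A_FF-norm with factor ε/(2+ε): for every vector x, ((I - σD^{-1}A_FF)x)^T A_FF ((I - σD^{-1}A_FF)x) ≤ (ε/(2+ε))² · x^T A_FF x. -/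
/-!
With `M = D⁻¹ A_FF`, which is self-adjoint for `⟨u, v⟩_D = u ⬝ᵥ D *ᵥ v` with spectrum in
`[1, 1 + ε]`, the operator `1 - σ M` has spectrum in `[-ε / (2 + ε), ε / (2 + ε)]`. To avoid
spectral theory we only look at the plane spanned by `x` and `z = M x`: the quadratic forms of
`A_FF` and `D` at `s • x - t • z` are determined by `p = ⟨x, x⟩_D`, `a = ⟨x, M x⟩_D`,
`d = ⟨x, M² x⟩_D`, `b = ⟨x, M³ x⟩_D`. The Loewner bounds at two such vectors give
`(1 + ε) a + b ≤ (2 + ε) d`, i.e. `⟨x, M (M - 1) (1 + ε - M) x⟩_D ≥ 0`, and the `A_FF`-norm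
defect `(ε / (2 + ε))² a - ‖(1 - σ M) x‖²` equals `4 ((2 + ε) d - (1 + ε) a - b) / (2 + ε)²`.
-/

open Matrix

namespace Matrix

variable {n R : Type*} [Fintype n]

theorem IsSymm.dotProduct_mulVec_comm [CommSemiring R] {M : Matrix n n R} (hM : M.IsSymm)
    (u w : n → R) : u ⬝ᵥ M *ᵥ w = w ⬝ᵥ M *ᵥ u := by
  rw [dotProduct_mulVec, ← mulVec_transpose, hM.eq, dotProduct_comm]

theorem IsSymm.smul_sub_smul_dotProduct_mulVec [CommRing R] {M : Matrix n n R} (hM : M.IsSymm)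
    (s t : R) (u w : n → R) :
    (s • u - t • w) ⬝ᵥ M *ᵥ (s • u - t • w) =
      s ^ 2 * (u ⬝ᵥ M *ᵥ u) - 2 * s * t * (u ⬝ᵥ M *ᵥ w) + t ^ 2 * (w ⬝ᵥ M *ᵥ w) := by
  simp only [mulVec_sub, mulVec_smul, dotProduct_sub, sub_dotProduct, dotProduct_smul,
    smul_dotProduct, smul_eq_mul, hM.dotProduct_mulVec_comm w u]
  ring

theorem dotProduct_mulVec_le_of_posSemidef_sub {M N : Matrix n n ℝ} (h : (N - M).PosSemidef)
    (w : n → ℝ) : w ⬝ᵥ M *ᵥ w ≤ w ⬝ᵥ N *ᵥ w := by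
  have := h.dotProduct_mulVec_nonneg w
  rwa [sub_mulVec, dotProduct_sub, star_trivial, sub_nonneg] at this

theorem smul_sub_smul_dotProduct_mulVec_of_mulVec_eq {D A : Matrix n n ℝ} (hD : D.IsSymm)
    (hA : A.IsSymm) {x z : n → ℝ} (hz : D *ᵥ z = A *ᵥ x) (s t : ℝ) :
    (s • x - t • z) ⬝ᵥ D *ᵥ (s • x - t • z) =
      s ^ 2 * (x ⬝ᵥ D *ᵥ x) - 2 * s * t * (x ⬝ᵥ A *ᵥ x) + t ^ 2 * (x ⬝ᵥ A *ᵥ z) := by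
  rw [hD.smul_sub_smul_dotProduct_mulVec, hz, hA.dotProduct_mulVec_comm z x]

end Matrix

/- For `ε > 0`, `ε` times the conclusion is `1 + ε` times the upper bound at `(s, t) = (1, 1)`
plus the lower bound at `(1 + ε, 1)`; for `ε = 0` the two bounds force `p = a = d = b`. -/
theorem one_add_mul_add_le_two_add_mul {ε p a d b : ℝ} (hε : 0 ≤ ε)
    (hlow : ∀ s t : ℝ,
      s ^ 2 * p - 2 * s * t * a + t ^ 2 * d ≤ s ^ 2 * a - 2 * s * t * d + t ^ 2 * b)
    (hhigh : ∀ s t : ℝ,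
      s ^ 2 * a - 2 * s * t * d + t ^ 2 * b ≤ (1 + ε) * (s ^ 2 * p - 2 * s * t * a + t ^ 2 * d)) :
    (1 + ε) * a + b ≤ (2 + ε) * d := by
  rcases hε.eq_or_lt with rfl | hε
  · linarith [hlow 1 0, hhigh 1 0, hlow 0 1, hhigh 0 1, hlow 1 1, hhigh 1 1]
  · have h : 0 ≤ ε * ((2 + ε) * d - ((1 + ε) * a + b)) := by
      nlinarith [hlow (1 + ε) 1, hhigh 1 1]
    linarith [nonneg_of_mul_nonneg_right h hε]

theorem sub_two_div_mul_add_le_sq_div_mul {ε a d b : ℝ} (hε : 0 ≤ ε)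
    (h : (1 + ε) * a + b ≤ (2 + ε) * d) :
    a - 2 * (2 / (2 + ε)) * d + (2 / (2 + ε)) ^ 2 * b ≤ (ε / (2 + ε)) ^ 2 * a := by
  have h2ε : 0 < 2 + ε := by linarith
  have hgap : (ε / (2 + ε)) ^ 2 * a - (a - 2 * (2 / (2 + ε)) * d + (2 / (2 + ε)) ^ 2 * b) =
      4 * ((2 + ε) * d - ((1 + ε) * a + b)) / (2 + ε) ^ 2 := by
    field_simp
    ring
  rw [← sub_nonneg, hgap]
  exact div_nonneg (by linarith) (by positivity)

/-- Weighted relaxation contraction: if `D ⪯ A_FF ⪯ (1+ε) • D` with `D`, `A_FF`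
symmetric positive definite and `σ = 2/(2+ε)`, then `I - σ D⁻¹ A_FF` is a
contraction in the `A_FF`-norm with factor `ε/(2+ε)`. -/
theorem weighted_relaxation_contraction
    {n : Type*} [Fintype n] [DecidableEq n]
    (D A_FF : Matrix n n ℝ) (ε : ℝ) (hε : 0 ≤ ε)
    (hD : D.PosDef) (hA : A_FF.PosDef)
    (hlow : (A_FF - D).PosSemidef)
    (hhigh : ((1 + ε) • D - A_FF).PosSemidef)
    (σ : ℝ) (hσ : σ = 2 / (2 + ε)) :
    ∀ x : n → ℝ,
      ((1 - σ • (D⁻¹ * A_FF)) *ᵥ x) ⬝ᵥ (A_FF *ᵥ ((1 - σ • (D⁻¹ * A_FF)) *ᵥ x))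
        ≤ (ε / (2 + ε)) ^ 2 * (x ⬝ᵥ (A_FF *ᵥ x)) := by
  intro x
  set z := D⁻¹ *ᵥ A_FF *ᵥ x
  have hz : D *ᵥ z = A_FF *ᵥ x := by
    rw [mulVec_mulVec, mul_nonsing_inv _ hD.det_pos.ne'.isUnit, one_mulVec]
  have hTx : (1 - σ • (D⁻¹ * A_FF)) *ᵥ x = (1 : ℝ) • x - σ • z := by
    rw [sub_mulVec, one_mulVec, smul_mulVec, ← mulVec_mulVec, one_smul]
  have hDsymm : D.IsSymm := hD.isHermitian
  have hAsymm : A_FF.IsSymm := hA.isHermitian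
  have key := one_add_mul_add_le_two_add_mul hε
    (fun s t ↦ by
      rw [← smul_sub_smul_dotProduct_mulVec_of_mulVec_eq hDsymm hAsymm hz,
        ← hAsymm.smul_sub_smul_dotProduct_mulVec]
      exact dotProduct_mulVec_le_of_posSemidef_sub hlow _)
    (fun s t ↦ by
      rw [← smul_sub_smul_dotProduct_mulVec_of_mulVec_eq hDsymm hAsymm hz,
        ← hAsymm.smul_sub_smul_dotProduct_mulVec]
      simpa only [smul_mulVec, dotProduct_smul, smul_eq_mul]
        using dotProduct_mulVec_le_of_posSemidef_sub hhigh _)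
  rw [hTx, hAsymm.smul_sub_smul_dotProduct_mulVec, one_pow, one_mul, mul_one, hσ]
  exact sub_two_div_mul_add_le_sq_div_mul hε key
end
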